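/- arXiv:0812.4439 — 2 statements merged into one kernel-verified Lean document; each statement's English description precedes it below -/
import Mathlib

section
/- Let (M,g) be a Lorentzian manifold. If there exists a conformal immersion i: M → L^N, then (M,g) is a stably causal spacetime (indeed x⁰∘i is a smooth time function). Moreover, if i is an isometric immersion, then: (a) the function τ = x⁰∘i, where x⁰ is the natural time coordinate of L^N, is a steep temporal function on M, satisfying g(∇τ,∇τ) ≤ −1; and (b) the time-separation d of (M,g) is finite-valued, with d(p,q) ≤ d₀(i(p), i(q)) for all p,q ∈ M, where d₀ is the time-separation of L^N. -/
open Manifold Set Topology Function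
open scoped ENNReal

noncomputable section

/-- The Minkowski scalar product of signature `(-,+,…,+)` on `ℝ^N`. -/
def mink (N : ℕ) (v w : EuclideanSpace ℝ (Fin N)) : ℝ :=
  ∑ j : Fin N, (if (j : ℕ) = 0 then (-1 : ℝ) else 1) * v j * w j

/-- The canonical future-pointing timelike vector `e₀` of Minkowski spacetime. -/
def minkE0 (N : ℕ) : EuclideanSpace ℝ (Fin N) :=
  (WithLp.equiv 2 (Fin N → ℝ)).symm (fun j => if (j : ℕ) = 0 then 1 else 0)

variable {n : ℕ} {M : Type*} [TopologicalSpace M] [ChartedSpace (EuclideanSpace ℝ (Fin n)) M]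

section Defs
variable [IsManifold (𝓡 n) (⊤ : ℕ∞) M]

/-- A vector field is smooth if it is a smooth section of the tangent bundle. -/
def IsSmoothVF (X : ∀ x : M, TangentSpace (𝓡 n) x) : Prop :=
  ContMDiff (𝓡 n) (𝓡 n).tangent (⊤ : ℕ∞) (fun x => (⟨x, X x⟩ : TangentBundle (𝓡 n) M))

/-- A (smooth) Lorentzian metric: a smooth symmetric bilinear form of index one
(signature `(-,+,…,+)`) on each tangent space. -/
structure IsLorentzMetric
    (g : ∀ x : M, TangentSpace (𝓡 n) x → TangentSpace (𝓡 n) x → ℝ) : Prop where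
  symm : ∀ (x : M) (v w : TangentSpace (𝓡 n) x), g x v w = g x w v
  add_left : ∀ (x : M) (u v w : TangentSpace (𝓡 n) x), g x (u + v) w = g x u w + g x v w
  smul_left : ∀ (x : M) (c : ℝ) (v w : TangentSpace (𝓡 n) x), g x (c • v) w = c * g x v w
  exists_timelike : ∀ x : M, ∃ v : TangentSpace (𝓡 n) x, g x v v < 0
  posdef_orth : ∀ (x : M) (v : TangentSpace (𝓡 n) x), g x v v < 0 →
    ∀ w : TangentSpace (𝓡 n) x, w ≠ 0 → g x v w = 0 → 0 < g x w w
  smooth : ∀ X Y : ∀ x : M, TangentSpace (𝓡 n) x, IsSmoothVF X → IsSmoothVF Y →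
    ContMDiff (𝓡 n) 𝓘(ℝ, ℝ) (⊤ : ℕ∞) fun x => g x (X x) (Y x)

/-- A time orientation: a smooth everywhere-timelike vector field. -/
structure IsTimeOrientation
    (g : ∀ x : M, TangentSpace (𝓡 n) x → TangentSpace (𝓡 n) x → ℝ)
    (T : ∀ x : M, TangentSpace (𝓡 n) x) : Prop where
  smoothVF : IsSmoothVF T
  timelike : ∀ x : M, g x (T x) (T x) < 0

end Defs

variable (g : ∀ x : M, TangentSpace (𝓡 n) x → TangentSpace (𝓡 n) x → ℝ)
  (T : ∀ x : M, TangentSpace (𝓡 n) x)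

/-- `v` is a timelike tangent vector at `x`. -/
def TimelikeVec (x : M) (v : TangentSpace (𝓡 n) x) : Prop := g x v v < 0

/-- `v` is a causal tangent vector at `x`. -/
def CausalVec (x : M) (v : TangentSpace (𝓡 n) x) : Prop := v ≠ 0 ∧ g x v v ≤ 0

/-- `v` is future-directed with respect to the time orientation `T`. -/
def FutureDir (x : M) (v : TangentSpace (𝓡 n) x) : Prop := g x v (T x) < 0

/-- `v` is past-directed with respect to the time orientation `T`. -/
def PastDir (x : M) (v : TangentSpace (𝓡 n) x) : Prop := 0 < g x v (T x)

/-- The velocity vector of a curve. -/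
def curveDeriv (γ : ℝ → M) (t : ℝ) : TangentSpace (𝓡 n) (γ t) :=
  mfderiv 𝓘(ℝ, ℝ) (𝓡 n) γ t ((1 : ℝ) : TangentSpace 𝓘(ℝ, ℝ) t)

/-- `γ` is a (`C¹`) future-directed causal curve on the parameter interval `[a,b]`. -/
structure IsCausalSeg (γ : ℝ → M) (a b : ℝ) : Prop where
  contMDiff : ContMDiff 𝓘(ℝ, ℝ) (𝓡 n) 1 γ
  causal : ∀ t ∈ Icc a b, CausalVec g (γ t) (curveDeriv γ t)
  future : ∀ t ∈ Icc a b, FutureDir g T (γ t) (curveDeriv γ t)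

/-- `γ` is a (`C¹`) future-directed timelike curve on the parameter interval `[a,b]`. -/
structure IsTimelikeSeg (γ : ℝ → M) (a b : ℝ) : Prop where
  contMDiff : ContMDiff 𝓘(ℝ, ℝ) (𝓡 n) 1 γ
  timelike : ∀ t ∈ Icc a b, TimelikeVec g (γ t) (curveDeriv γ t)
  future : ∀ t ∈ Icc a b, FutureDir g T (γ t) (curveDeriv γ t)

/-- Chronological relation `p ≪ q`. -/
def ChronRel (p q : M) : Prop :=
  ∃ γ : ℝ → M, IsTimelikeSeg g T γ 0 1 ∧ γ 0 = p ∧ γ 1 = q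

/-- Causal relation `p ≤ q` (`q ∈ J⁺(p)`). -/
def CausalRel (p q : M) : Prop :=
  p = q ∨ ∃ γ : ℝ → M, IsCausalSeg g T γ 0 1 ∧ γ 0 = p ∧ γ 1 = q

/-- Chronological future `I⁺(p)`. -/
def IPlus (p : M) : Set M := {q | ChronRel g T p q}

/-- Causal future `J⁺(p)`. -/
def JPlus (p : M) : Set M := {q | CausalRel g T p q}

/-- Causal past `J⁻(q)`. -/
def JMinus (q : M) : Set M := {p | CausalRel g T p q}

/-- Causal future of a set. -/
def JPlusSet (A : Set M) : Set M := {q | ∃ p ∈ A, CausalRel g T p q}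

/-- Causal past of a set. -/
def JMinusSet (B : Set M) : Set M := {p | ∃ q ∈ B, CausalRel g T p q}

/-- `J(A,B) := J⁺(A) ∩ J⁻(B)`. -/
def JSets (A B : Set M) : Set M := JPlusSet g T A ∩ JMinusSet g T B

/-- A time function: continuous and strictly increasing on every
future-directed causal curve. -/
def IsTimeFunction (f : M → ℝ) : Prop :=
  Continuous f ∧ ∀ (γ : ℝ → M) (a b : ℝ), a < b → IsCausalSeg g T γ a b → f (γ a) < f (γ b)

/-- A spacetime is stably causal iff it admits a time function. -/
def StablyCausal : Prop := ∃ f : M → ℝ, IsTimeFunction g T f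

/-- The spacetime is causal: no closed causal curves. -/
def IsCausalST : Prop := ∀ p q : M, CausalRel g T p q → CausalRel g T q p → p = q

/-- Globally hyperbolic: causal with compact causal diamonds. -/
def GloballyHyperbolic : Prop :=
  IsCausalST g T ∧ ∀ p q : M, IsCompact (JPlus g T p ∩ JMinus g T q)

/-- Causally simple: causal with closed `J⁺(p)` and `J⁻(p)`. -/
def CausallySimple : Prop :=
  IsCausalST g T ∧ ∀ p : M, IsClosed (JPlus g T p) ∧ IsClosed (JMinus g T p)

/-- `X` is the gradient of `f` with respect to `g`: `g(∇f, ·) = df`. -/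
def IsGradient (f : M → ℝ) (X : ∀ x : M, TangentSpace (𝓡 n) x) : Prop :=
  ∀ (x : M) (v : TangentSpace (𝓡 n) x), g x (X x) v = mfderiv (𝓡 n) 𝓘(ℝ, ℝ) f x v

/-- `f` is a temporal function with (past-directed timelike) gradient `X`. -/
structure IsTemporalWithGrad (f : M → ℝ) (X : ∀ x : M, TangentSpace (𝓡 n) x) : Prop where
  contMDiff : ContMDiff (𝓡 n) 𝓘(ℝ, ℝ) (⊤ : ℕ∞) f
  grad : IsGradient g f X
  timelike : ∀ x : M, TimelikeVec g x (X x)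
  past : ∀ x : M, PastDir g T x (X x)

/-- An inextendible future-directed timelike curve (parametrized on all of `ℝ`,
converging at neither end). -/
structure IsInextTimelike (γ : ℝ → M) : Prop where
  contMDiff : ContMDiff 𝓘(ℝ, ℝ) (𝓡 n) 1 γ
  timelike : ∀ t : ℝ, TimelikeVec g (γ t) (curveDeriv γ t)
  future : ∀ t : ℝ, FutureDir g T (γ t) (curveDeriv γ t)
  noFutureEndpoint : ¬∃ p : M, Filter.Tendsto γ Filter.atTop (nhds p)
  noPastEndpoint : ¬∃ p : M, Filter.Tendsto γ Filter.atBot (nhds p)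

/-- A Cauchy hypersurface: a set met exactly once by every inextendible timelike curve. -/
def IsCauchyHypersurface (S : Set M) : Prop :=
  ∀ γ : ℝ → M, IsInextTimelike g T γ → ∃! t : ℝ, γ t ∈ S

/-- The Lorentzian length of a curve segment (on `[0,1]`). -/
def curveLength (γ : ℝ → M) : ℝ :=
  ∫ t in (0:ℝ)..1, Real.sqrt |g (γ t) (curveDeriv γ t) (curveDeriv γ t)|

/-- The time-separation (Lorentzian distance) function. -/
def timeSep (p q : M) : ℝ≥0∞ :=
  ⨆ γ : {γ : ℝ → M // IsCausalSeg g T γ 0 1 ∧ γ 0 = p ∧ γ 1 = q},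
    ENNReal.ofReal (curveLength g γ.1)

/-- An isometric immersion into Minkowski spacetime `𝕃^N`, compatible with the
time orientations. -/
structure IsIsometricImmersionMink (N : ℕ) (i : M → EuclideanSpace ℝ (Fin N)) : Prop where
  contMDiff : ContMDiff (𝓡 n) (𝓡 N) (⊤ : ℕ∞) i
  immersion : ∀ x : M, Injective (mfderiv (𝓡 n) (𝓡 N) i x)
  isometric : ∀ (x : M) (v w : TangentSpace (𝓡 n) x),
    mink N (mfderiv (𝓡 n) (𝓡 N) i x v) (mfderiv (𝓡 n) (𝓡 N) i x w) = g x v w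
  timeOriented : ∀ (x : M) (v : TangentSpace (𝓡 n) x),
    TimelikeVec g x v → FutureDir g T x v →
      mink N (mfderiv (𝓡 n) (𝓡 N) i x v) (minkE0 N) < 0

/-- An isometric embedding into Minkowski spacetime `𝕃^N`. -/
structure IsIsometricEmbeddingMink (N : ℕ) (i : M → EuclideanSpace ℝ (Fin N))
    extends IsIsometricImmersionMink g T N i : Prop where
  embedding : IsEmbedding i

/-- A conformal immersion into Minkowski spacetime `𝕃^N`. -/
structure IsConformalImmersionMink (N : ℕ) (i : M → EuclideanSpace ℝ (Fin N)) : Prop where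
  contMDiff : ContMDiff (𝓡 n) (𝓡 N) (⊤ : ℕ∞) i
  immersion : ∀ x : M, Injective (mfderiv (𝓡 n) (𝓡 N) i x)
  conformal : ∃ Ω : M → ℝ, (∀ x, 0 < Ω x) ∧ ContMDiff (𝓡 n) 𝓘(ℝ, ℝ) (⊤ : ℕ∞) Ω ∧
    ∀ (x : M) (v w : TangentSpace (𝓡 n) x),
      mink N (mfderiv (𝓡 n) (𝓡 N) i x v) (mfderiv (𝓡 n) (𝓡 N) i x w) = Ω x * g x v w
  timeOriented : ∀ (x : M) (v : TangentSpace (𝓡 n) x),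
    TimelikeVec g x v → FutureDir g T x v →
      mink N (mfderiv (𝓡 n) (𝓡 N) i x v) (minkE0 N) < 0

/-- A conformal embedding into Minkowski spacetime `𝕃^N`. -/
structure IsConformalEmbeddingMink (N : ℕ) (i : M → EuclideanSpace ℝ (Fin N))
    extends IsConformalImmersionMink g T N i : Prop where
  embedding : IsEmbedding i


/-- The differential of a real-valued function applied to a tangent vector, as a real
number. -/
def mdiffR {n : ℕ} {M : Type*} [TopologicalSpace M]
    [ChartedSpace (EuclideanSpace ℝ (Fin n)) M]
    (f : M → ℝ) (x : M) (v : TangentSpace (𝓡 n) x) : ℝ :=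
  mfderiv (𝓡 n) 𝓘(ℝ, ℝ) f x v

/-! The time coordinate `τ = x⁰ ∘ i` satisfies `dτ(v) = (di v)⁰`, and a conformal immersion sends
future causal vectors to future causal vectors of `𝕃^N`, whose time components are positive; so
`τ` increases along future causal curves. An isometric immersion also preserves the length of
causal curves, and in `𝕃^N` the length of a future causal curve is at most the increase of `x⁰`
along it, since `√(-⟪v, v⟫) ≤ v⁰` for future causal `v`. -/

section Calculus

variable {g} {N : ℕ}

instance (y : EuclideanSpace ℝ (Fin N)) : CoeFun (TangentSpace (𝓡 N) y) fun _ => Fin N → ℝ :=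
  ⟨fun v => WithLp.ofLp (p := 2) v⟩

lemma contMDiff_apply_coord {k : WithTop ℕ∞} {i : M → EuclideanSpace ℝ (Fin N)}
    (hi : ContMDiff (𝓡 n) (𝓡 N) k i) (j : Fin N) :
    ContMDiff (𝓡 n) 𝓘(ℝ, ℝ) k fun x => i x j :=
  (EuclideanSpace.proj j : EuclideanSpace ℝ (Fin N) →L[ℝ] ℝ).contMDiff.comp hi

lemma mfderiv_apply_coord {i : M → EuclideanSpace ℝ (Fin N)} {x : M}
    (hi : MDifferentiableAt (𝓡 n) (𝓡 N) i x) (j : Fin N) (v : TangentSpace (𝓡 n) x) :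
    mfderiv (𝓡 n) 𝓘(ℝ, ℝ) (fun y => i y j) x v = mfderiv (𝓡 n) (𝓡 N) i x v j := by
  let π : EuclideanSpace ℝ (Fin N) →L[ℝ] ℝ := EuclideanSpace.proj j
  have hπ : MDifferentiableAt (𝓡 N) 𝓘(ℝ, ℝ) π (i x) :=
    π.contMDiff.mdifferentiableAt (n := 1) one_ne_zero
  have hπ' : mfderiv (𝓡 N) 𝓘(ℝ, ℝ) π (i x) = π := by
    rw [mfderiv_eq_fderiv]
    exact π.fderiv
  rw [show (fun y => i y j) = π ∘ i from rfl, mfderiv_comp x hπ hi, hπ']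
  rfl

lemma curveDeriv_comp {m : ℕ} {M' : Type*} [TopologicalSpace M']
    [ChartedSpace (EuclideanSpace ℝ (Fin m)) M'] {f : M → M'} {γ : ℝ → M} {t : ℝ}
    (hf : MDifferentiableAt (𝓡 n) (𝓡 m) f (γ t)) (hγ : MDifferentiableAt 𝓘(ℝ, ℝ) (𝓡 n) γ t) :
    curveDeriv (f ∘ γ) t = mfderiv (𝓡 n) (𝓡 m) f (γ t) (curveDeriv γ t) := by
  rw [curveDeriv, mfderiv_comp t hf hγ]
  rfl

lemma curveDeriv_eq_deriv (σ : ℝ → EuclideanSpace ℝ (Fin N)) (t : ℝ) :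
    curveDeriv σ t = deriv σ t := by
  rw [curveDeriv, mfderiv_eq_fderiv]
  exact fderiv_apply_one_eq_deriv (f := σ) (x := t)

lemma deriv_apply_coord {σ : ℝ → EuclideanSpace ℝ (Fin N)} {t : ℝ}
    (hσ : DifferentiableAt ℝ σ t) (j : Fin N) :
    deriv (fun s => σ s j) t = deriv σ t j :=
  ((EuclideanSpace.proj j : EuclideanSpace ℝ (Fin N) →L[ℝ] ℝ).hasFDerivAt.comp_hasDerivAt t
    hσ.hasDerivAt).deriv

lemma deriv_apply_coord_comp {i : M → EuclideanSpace ℝ (Fin N)} {γ : ℝ → M} {t : ℝ}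
    (hi : MDifferentiableAt (𝓡 n) (𝓡 N) i (γ t)) (hγ : MDifferentiableAt 𝓘(ℝ, ℝ) (𝓡 n) γ t)
    (j : Fin N) :
    deriv (fun s => i (γ s) j) t = mfderiv (𝓡 n) (𝓡 N) i (γ t) (curveDeriv γ t) j := by
  have hiγ : DifferentiableAt ℝ (i ∘ γ) t :=
    mdifferentiableAt_iff_differentiableAt.mp (hi.comp t hγ)
  rw [show (fun s => i (γ s) j) = fun s => (i ∘ γ) s j from rfl, deriv_apply_coord hiγ,
    ← curveDeriv_eq_deriv, curveDeriv_comp hi hγ]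

lemma IsGradient.apply_eq_mfderiv_coord {i : M → EuclideanSpace ℝ (Fin N)} {j : Fin N}
    {X : ∀ x : M, TangentSpace (𝓡 n) x}
    (hX : IsGradient g (fun x => i x j) X) {x : M} (hi : MDifferentiableAt (𝓡 n) (𝓡 N) i x)
    (v : TangentSpace (𝓡 n) x) :
    g x (X x) v = mfderiv (𝓡 n) (𝓡 N) i x v j :=
  (hX x v).trans (mfderiv_apply_coord hi j v)

end Calculus

namespace Minkowski

variable {N : ℕ} (hN : 0 < N)

lemma mink_eq_neg_mul_add_sum (v w : EuclideanSpace ℝ (Fin N)) :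
    mink N v w = -(v ⟨0, hN⟩ * w ⟨0, hN⟩) + ∑ j ∈ Finset.univ.erase ⟨0, hN⟩, v j * w j := by
  rw [mink, ← Finset.add_sum_erase _ _ (Finset.mem_univ ⟨0, hN⟩)]
  congr 1
  · simp
  · refine Finset.sum_congr rfl fun j hj => ?_
    have hj0 : (j : ℕ) ≠ 0 := fun h => (Finset.mem_erase.mp hj).1 (Fin.ext h)
    simp [hj0]

lemma mink_comm (v w : EuclideanSpace ℝ (Fin N)) : mink N v w = mink N w v :=
  Finset.sum_congr rfl fun _ _ => by ring

lemma mink_add_left (u v w : EuclideanSpace ℝ (Fin N)) :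
    mink N (u + v) w = mink N u w + mink N v w := by
  simp only [mink, ← Finset.sum_add_distrib, PiLp.add_apply]
  exact Finset.sum_congr rfl fun _ _ => by ring

lemma mink_add_right (u v w : EuclideanSpace ℝ (Fin N)) :
    mink N u (v + w) = mink N u v + mink N u w := by
  rw [mink_comm, mink_add_left, mink_comm v, mink_comm w]

lemma mink_minkE0 (v : EuclideanSpace ℝ (Fin N)) : mink N v (minkE0 N) = -v ⟨0, hN⟩ := by
  rw [mink_eq_neg_mul_add_sum hN, Finset.sum_eq_zero fun j hj => ?_]
  · simp [minkE0]
  · have hj0 : (j : ℕ) ≠ 0 := fun h => (Finset.mem_erase.mp hj).1 (Fin.ext h)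
    simp [minkE0, hj0]

lemma minkE0_apply_zero : minkE0 N ⟨0, hN⟩ = 1 := by simp [minkE0]

lemma mink_minkE0_minkE0 (hN : 0 < N) : mink N (minkE0 N) (minkE0 N) = -1 := by
  rw [mink_minkE0 hN, minkE0_apply_zero]

/-- The Cauchy–Schwarz inequality for the spatial parts, written in terms of `mink`. -/
lemma sq_mink_add_mul_le (v w : EuclideanSpace ℝ (Fin N)) :
    (mink N v w + v ⟨0, hN⟩ * w ⟨0, hN⟩) ^ 2 ≤
      (mink N v v + v ⟨0, hN⟩ ^ 2) * (mink N w w + w ⟨0, hN⟩ ^ 2) := by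
  simp only [mink_eq_neg_mul_add_sum hN, neg_add_cancel_comm, ← sq]
  exact Finset.sum_mul_sq_le_sq_mul_sq _ _ _

lemma mink_self_add_sq_nonneg (v : EuclideanSpace ℝ (Fin N)) :
    0 ≤ mink N v v + v ⟨0, hN⟩ ^ 2 := by
  rw [mink_eq_neg_mul_add_sum hN]
  nlinarith [Finset.sum_nonneg fun j (_ : j ∈ Finset.univ.erase (⟨0, hN⟩ : Fin N)) =>
    mul_self_nonneg (v j)]

lemma time_pos_of_mink_neg {w u : EuclideanSpace ℝ (Fin N)} (hw : mink N w w ≤ 0)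
    (hu : mink N u u < 0) (hu₀ : 0 < u ⟨0, hN⟩) (hwu : mink N w u < 0) : 0 < w ⟨0, hN⟩ := by
  by_contra! hw₀
  nlinarith [sq_mink_add_mul_le hN w u, mink_self_add_sq_nonneg hN w,
    mink_self_add_sq_nonneg hN u, mul_nonpos_of_nonpos_of_nonneg hw₀ hu₀.le,
    mul_nonneg (mink_self_add_sq_nonneg hN w) (sq_nonneg (u ⟨0, hN⟩))]

lemma mink_self_nonneg_of_mink_eq_zero (hN : 0 < N) {a u : EuclideanSpace ℝ (Fin N)}
    (ha : mink N a a < 0) (hau : mink N a u = 0) : 0 ≤ mink N u u := by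
  by_contra! hu
  have hCS := sq_mink_add_mul_le hN a u
  rw [hau, zero_add, mul_pow] at hCS
  have ha' := mink_self_add_sq_nonneg hN a
  have hu' := mink_self_add_sq_nonneg hN u
  have : (mink N a a + a ⟨0, hN⟩ ^ 2) * (mink N u u + u ⟨0, hN⟩ ^ 2) <
      a ⟨0, hN⟩ ^ 2 * u ⟨0, hN⟩ ^ 2 :=
    calc _ ≤ (mink N a a + a ⟨0, hN⟩ ^ 2) * u ⟨0, hN⟩ ^ 2 := by gcongr; linarith
      _ < _ := by gcongr <;> linarith
  linarith

lemma sqrt_abs_mink_self_le {v : EuclideanSpace ℝ (Fin N)} (hv : mink N v v ≤ 0)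
    (hv₀ : 0 ≤ v ⟨0, hN⟩) : √|mink N v v| ≤ v ⟨0, hN⟩ := by
  rw [Real.sqrt_le_left hv₀, abs_of_nonpos hv]
  linarith [mink_self_add_sq_nonneg hN v]

lemma continuous_mink :
    Continuous fun p : EuclideanSpace ℝ (Fin N) × EuclideanSpace ℝ (Fin N) => mink N p.1 p.2 := by
  unfold mink
  fun_prop

abbrev metric (N : ℕ) :
    ∀ y : EuclideanSpace ℝ (Fin N), TangentSpace (𝓡 N) y → TangentSpace (𝓡 N) y → ℝ :=
  fun _ v w => mink N v w

abbrev timeOrientation (N : ℕ) : ∀ y : EuclideanSpace ℝ (Fin N), TangentSpace (𝓡 N) y :=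
  fun _ => minkE0 N

lemma curveLength_le_sub {σ : ℝ → EuclideanSpace ℝ (Fin N)}
    (hσ : IsCausalSeg (metric N) (timeOrientation N) σ 0 1) :
    curveLength (metric N) σ ≤ σ 1 ⟨0, hN⟩ - σ 0 ⟨0, hN⟩ := by
  have hC1 : ContDiff ℝ 1 σ := contMDiff_iff_contDiff.mp hσ.contMDiff
  have hderiv : Continuous (deriv σ) := hC1.continuous_deriv le_rfl
  have hdiff : Differentiable ℝ σ := hC1.differentiable one_ne_zero
  have htime : deriv (fun t => σ t ⟨0, hN⟩) = fun t => deriv σ t ⟨0, hN⟩ :=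
    funext fun t => deriv_apply_coord (hdiff t) _
  have htime_cont : Continuous fun t => deriv σ t ⟨0, hN⟩ :=
    (EuclideanSpace.proj (⟨0, hN⟩ : Fin N)).continuous.comp hderiv
  have hpt (t : ℝ) (ht : t ∈ Icc (0 : ℝ) 1) :
      √|mink N (deriv σ t) (deriv σ t)| ≤ deriv σ t ⟨0, hN⟩ := by
    have hcausal := (hσ.causal t ht).2
    have hfuture : mink N (deriv σ t) (minkE0 N) < 0 := curveDeriv_eq_deriv σ t ▸ hσ.future t ht
    rw [curveDeriv_eq_deriv] at hcausal
    rw [mink_minkE0 hN] at hfuture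
    exact sqrt_abs_mink_self_le hN hcausal (by linarith)
  calc curveLength (metric N) σ = ∫ t in (0 : ℝ)..1, √|mink N (deriv σ t) (deriv σ t)| := by
        simp only [curveLength, curveDeriv_eq_deriv]
    _ ≤ ∫ t in (0 : ℝ)..1, deriv (fun t => σ t ⟨0, hN⟩) t := by
        rw [htime]
        refine intervalIntegral.integral_mono_on zero_le_one ?_ ?_ hpt
        · exact (Real.continuous_sqrt.comp (continuous_mink.comp
            (hderiv.prodMk hderiv)).abs).intervalIntegrable 0 1
        · exact htime_cont.intervalIntegrable 0 1
    _ = σ 1 ⟨0, hN⟩ - σ 0 ⟨0, hN⟩ := by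
        refine intervalIntegral.integral_deriv_eq_sub (fun t _ => ?_) ?_
        · exact (EuclideanSpace.proj (⟨0, hN⟩ : Fin N)).differentiableAt.comp t (hdiff t)
        · exact htime ▸ htime_cont.intervalIntegrable 0 1

lemma timeSep_le_ofReal_sub (y y' : EuclideanSpace ℝ (Fin N)) :
    timeSep (metric N) (timeOrientation N) y y' ≤ ENNReal.ofReal (y' ⟨0, hN⟩ - y ⟨0, hN⟩) :=
  iSup_le fun ⟨σ, hσ, h0, h1⟩ => by
    subst h0 h1
    exact ENNReal.ofReal_le_ofReal (curveLength_le_sub hN hσ)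

end Minkowski

section LorentzMetric

variable [IsManifold (𝓡 n) (⊤ : ℕ∞) M] {g}

def IsLorentzMetric.bilinForm (hg : IsLorentzMetric g) (x : M) :
    LinearMap.BilinForm ℝ (TangentSpace (𝓡 n) x) :=
  LinearMap.mk₂ ℝ (g x) (hg.add_left x) (hg.smul_left x)
    (fun u v w => by rw [hg.symm, hg.add_left, hg.symm x v, hg.symm x w])
    (fun c u v => by rw [hg.symm, hg.smul_left, hg.symm x v]; rfl)

lemma IsLorentzMetric.bilinForm_nondegenerate (hg : IsLorentzMetric g) (x : M) :
    (hg.bilinForm x).Nondegenerate := by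
  have hrefl : (hg.bilinForm x).IsRefl := fun u v h => by
    simpa [IsLorentzMetric.bilinForm, hg.symm x v u] using h
  refine hrefl.nondegenerate_iff_separatingLeft.mpr fun w hw => ?_
  by_contra hw0
  obtain ⟨v, hv⟩ := hg.exists_timelike x
  have hvw : g x v w = 0 := by simpa [IsLorentzMetric.bilinForm, hg.symm x w v] using hw v
  have hww : g x w w = 0 := by simpa [IsLorentzMetric.bilinForm] using hw w
  exact (hg.posdef_orth x v hv w hw0 hvw).ne' hww

lemma IsLorentzMetric.exists_isGradient (hg : IsLorentzMetric g) (f : M → ℝ) :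
    ∃ X : ∀ x : M, TangentSpace (𝓡 n) x, IsGradient g f X := by
  have (x : M) : FiniteDimensional ℝ (TangentSpace (𝓡 n) x) :=
    inferInstanceAs (FiniteDimensional ℝ (EuclideanSpace ℝ (Fin n)))
  exact ⟨fun x => ((hg.bilinForm x).toDual (hg.bilinForm_nondegenerate x)).symm
      (mfderiv (𝓡 n) 𝓘(ℝ, ℝ) f x : TangentSpace (𝓡 n) x →L[ℝ] ℝ).toLinearMap,
    fun x v => LinearMap.BilinForm.apply_toDual_symm_apply (B := hg.bilinForm x) _ v⟩

end LorentzMetric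

section Immersion

variable {g T} {N : ℕ} {i : M → EuclideanSpace ℝ (Fin N)}

lemma IsIsometricImmersionMink.toIsConformalImmersionMink (hi : IsIsometricImmersionMink g T N i) :
    IsConformalImmersionMink g T N i where
  contMDiff := hi.contMDiff
  immersion := hi.immersion
  conformal := ⟨1, fun _ => one_pos, contMDiff_const, fun x v w => by simp [hi.isometric]⟩
  timeOriented := hi.timeOriented

lemma IsIsometricImmersionMink.curveLength_comp (hi : IsIsometricImmersionMink g T N i)
    {γ : ℝ → M} (hγ : ContMDiff 𝓘(ℝ, ℝ) (𝓡 n) 1 γ) :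
    curveLength (Minkowski.metric N) (i ∘ γ) = curveLength g γ := by
  unfold curveLength
  congr 1
  funext t
  rw [curveDeriv_comp (hi.contMDiff.mdifferentiableAt (by simp)) (hγ.mdifferentiableAt one_ne_zero)]
  exact congrArg (√|·|) (hi.isometric _ _ _)

variable [IsManifold (𝓡 n) (⊤ : ℕ∞) M]

lemma IsConformalImmersionMink.mfderiv_time_pos (hi : IsConformalImmersionMink g T N i)
    (hT : IsTimeOrientation g T) (hN : 0 < N) {x : M} {v : TangentSpace (𝓡 n) x}
    (hv : g x v v ≤ 0) (hfut : FutureDir g T x v) :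
    0 < mfderiv (𝓡 n) (𝓡 N) i x v ⟨0, hN⟩ := by
  obtain ⟨Ω, hΩ, -, hconf⟩ := hi.conformal
  have hT' := hT.timelike x
  have hT₀ : 0 < mfderiv (𝓡 n) (𝓡 N) i x (T x) ⟨0, hN⟩ := neg_lt_zero.mp <|
    (Minkowski.mink_minkE0 hN _).symm.trans_lt (hi.timeOriented x (T x) hT' hT')
  refine Minkowski.time_pos_of_mink_neg hN ?_ ?_ hT₀ ?_
  · rw [hconf]; exact mul_nonpos_of_nonneg_of_nonpos (hΩ x).le hv
  · rw [hconf]; exact mul_neg_of_pos_of_neg (hΩ x) hT'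
  · rw [hconf]; exact mul_neg_of_pos_of_neg (hΩ x) hfut

lemma IsConformalImmersionMink.isTimeFunction (hi : IsConformalImmersionMink g T N i)
    (hT : IsTimeOrientation g T) (hN : 0 < N) :
    IsTimeFunction g T fun x => i x ⟨0, hN⟩ := by
  have hτ := contMDiff_apply_coord hi.contMDiff ⟨0, hN⟩
  refine ⟨hτ.continuous, fun γ a b hab hγ => ?_⟩
  have hmono : StrictMonoOn (fun s => i (γ s) ⟨0, hN⟩) (Icc a b) := by
    refine strictMonoOn_of_deriv_pos (convex_Icc a b)
      (hτ.continuous.comp hγ.contMDiff.continuous).continuousOn fun t ht => ?_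
    have ht' := interior_subset ht
    rw [deriv_apply_coord_comp (hi.contMDiff.mdifferentiableAt (by simp))
      (hγ.contMDiff.mdifferentiableAt one_ne_zero)]
    exact hi.mfderiv_time_pos hT hN (hγ.causal t ht').2 (hγ.future t ht')
  exact hmono (left_mem_Icc.mpr hab.le) (right_mem_Icc.mpr hab.le) hab

lemma IsConformalImmersionMink.isCausalSeg_comp (hi : IsConformalImmersionMink g T N i)
    (hT : IsTimeOrientation g T) (hN : 0 < N) {γ : ℝ → M} {a b : ℝ}
    (hγ : IsCausalSeg g T γ a b) :
    IsCausalSeg (Minkowski.metric N) (Minkowski.timeOrientation N) (i ∘ γ) a b := by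
  obtain ⟨Ω, hΩ, -, hconf⟩ := hi.conformal
  have hd (t : ℝ) := curveDeriv_comp (hi.contMDiff.mdifferentiableAt (x := γ t) (by simp))
    (hγ.contMDiff.mdifferentiableAt one_ne_zero)
  refine ⟨(hi.contMDiff.of_le (by exact_mod_cast le_top)).comp hγ.contMDiff,
    fun t ht => ⟨?_, ?_⟩, fun t ht => ?_⟩
  · rw [hd]
    exact fun h => (hγ.causal t ht).1 (hi.immersion _ (h.trans (map_zero _).symm))
  · show mink N _ _ ≤ 0
    rw [hd, hconf]
    exact mul_nonpos_of_nonneg_of_nonpos (hΩ _).le (hγ.causal t ht).2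
  · refine (Minkowski.mink_minkE0 hN _).trans_lt (neg_lt_zero.mpr ?_)
    rw [hd]
    exact hi.mfderiv_time_pos hT hN (hγ.causal t ht).2 (hγ.future t ht)

lemma IsIsometricImmersionMink.timeSep_le (hi : IsIsometricImmersionMink g T N i)
    (hT : IsTimeOrientation g T) (hN : 0 < N) (p q : M) :
    timeSep g T p q ≤ timeSep (Minkowski.metric N) (Minkowski.timeOrientation N) (i p) (i q) :=
  iSup_le fun ⟨γ, hγ, h0, h1⟩ => by
    rw [← hi.curveLength_comp hγ.contMDiff]
    exact le_iSup_of_le ⟨i ∘ γ, hi.toIsConformalImmersionMink.isCausalSeg_comp hT hN hγ,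
      by simp [h0], by simp [h1]⟩ le_rfl

/-- `∇τ + e₀` is orthogonal to the timelike vector `di(T)`, hence spacelike or null;
expanding its square gives `g(∇τ, ∇τ) ≤ -1`. -/
lemma IsIsometricImmersionMink.gradient_self_le (hi : IsIsometricImmersionMink g T N i)
    (hT : IsTimeOrientation g T) (hN : 0 < N) {X : ∀ x : M, TangentSpace (𝓡 n) x}
    (hX : IsGradient g (fun x => i x ⟨0, hN⟩) X) (x : M) :
    g x (X x) (X x) ≤ -1 := by
  have hgrad := hX.apply_eq_mfderiv_coord (hi.contMDiff.mdifferentiableAt (x := x) (by simp))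
  set w : EuclideanSpace ℝ (Fin N) := mfderiv (𝓡 n) (𝓡 N) i x (X x)
  set a : EuclideanSpace ℝ (Fin N) := mfderiv (𝓡 n) (𝓡 N) i x (T x)
  have hww : mink N w w = w ⟨0, hN⟩ := (hi.isometric x _ _).trans (hgrad _)
  have hwa : mink N w a = a ⟨0, hN⟩ := (hi.isometric x _ _).trans (hgrad _)
  have haa : mink N a a < 0 := (hi.isometric x _ _).trans_lt (hT.timelike x)
  have horth : mink N a (w + minkE0 N) = 0 := by
    rw [Minkowski.mink_add_right, Minkowski.mink_comm, hwa, Minkowski.mink_minkE0 hN]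
    ring
  have hspacelike := Minkowski.mink_self_nonneg_of_mink_eq_zero hN haa horth
  rw [Minkowski.mink_add_left, Minkowski.mink_add_right, Minkowski.mink_add_right, hww,
    Minkowski.mink_comm (minkE0 N), Minkowski.mink_minkE0 hN,
    Minkowski.mink_minkE0_minkE0 hN] at hspacelike
  rw [hgrad]
  linarith

lemma IsIsometricImmersionMink.isTemporalWithGrad (hi : IsIsometricImmersionMink g T N i)
    (hT : IsTimeOrientation g T) (hN : 0 < N) {X : ∀ x : M, TangentSpace (𝓡 n) x}
    (hX : IsGradient g (fun x => i x ⟨0, hN⟩) X) :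
    IsTemporalWithGrad g T (fun x => i x ⟨0, hN⟩) X where
  contMDiff := contMDiff_apply_coord hi.contMDiff _
  grad := hX
  timelike x := (hi.gradient_self_le hT hN hX x).trans_lt (by norm_num)
  past x := by
    show 0 < g x (X x) (T x)
    rw [hX.apply_eq_mfderiv_coord (hi.contMDiff.mdifferentiableAt (by simp))]
    exact hi.toIsConformalImmersionMink.mfderiv_time_pos hT hN (hT.timelike x).le (hT.timelike x)

end Immersion

theorem conformal_immersion_mink_implies_stably_causal_general
    {n : ℕ} {M : Type*} [TopologicalSpace M] [ChartedSpace (EuclideanSpace ℝ (Fin n)) M]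
    [IsManifold (𝓡 n) (⊤ : ℕ∞) M]
    (g : ∀ x : M, TangentSpace (𝓡 n) x → TangentSpace (𝓡 n) x → ℝ)
    (T : ∀ x : M, TangentSpace (𝓡 n) x)
    (hg : IsLorentzMetric g) (hT : IsTimeOrientation g T)
    (N : ℕ) (hN : 0 < N) (i : M → EuclideanSpace ℝ (Fin N)) :
    (IsConformalImmersionMink g T N i →
      (IsTimeFunction g T (fun x => i x ⟨0, hN⟩) ∧
        ContMDiff (𝓡 n) 𝓘(ℝ, ℝ) (⊤ : ℕ∞) (fun x => i x ⟨0, hN⟩) ∧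
        StablyCausal g T)) ∧
    (IsIsometricImmersionMink g T N i →
      ((∃ X : ∀ x : M, TangentSpace (𝓡 n) x,
          IsTemporalWithGrad g T (fun x => i x ⟨0, hN⟩) X ∧
          ∀ x : M, g x (X x) (X x) ≤ -1) ∧
        (∀ p q : M,
          timeSep g T p q ≤
            timeSep (fun (_ : EuclideanSpace ℝ (Fin N)) v w => mink N v w)
              (fun _ => minkE0 N) (i p) (i q)) ∧
        (∀ p q : M, timeSep g T p q ≠ ⊤))) := by
  refine ⟨fun hc => ⟨hc.isTimeFunction hT hN, contMDiff_apply_coord hc.contMDiff _,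
    _, hc.isTimeFunction hT hN⟩, fun hiso => ?_⟩
  obtain ⟨X, hX⟩ := hg.exists_isGradient fun x => i x ⟨0, hN⟩
  refine ⟨⟨X, hiso.isTemporalWithGrad hT hN hX, hiso.gradient_self_le hT hN hX⟩,
    hiso.timeSep_le hT hN, fun p q => ?_⟩
  exact ne_top_of_le_ne_top ENNReal.ofReal_ne_top
    ((hiso.timeSep_le hT hN p q).trans (Minkowski.timeSep_le_ofReal_sub hN _ _))

/-- If a Lorentzian manifold admits a conformal immersion `i` into `𝕃^N`,
then it is stably causal (indeed `x⁰ ∘ i` is a smooth time function); if `i` is moreover an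
isometric immersion then (a) `τ = x⁰ ∘ i` is a steep temporal function, and (b) the
time-separation `d` of `(M,g)` is finite-valued, with `d(p,q) ≤ d₀(i p, i q)`. -/
theorem conformal_immersion_mink_implies_stably_causal
    {n : ℕ} {M : Type*} [TopologicalSpace M] [ChartedSpace (EuclideanSpace ℝ (Fin n)) M]
    [IsManifold (𝓡 n) (⊤ : ℕ∞) M] [ConnectedSpace M]
    (g : ∀ x : M, TangentSpace (𝓡 n) x → TangentSpace (𝓡 n) x → ℝ)
    (T : ∀ x : M, TangentSpace (𝓡 n) x)
    (hg : IsLorentzMetric g) (hT : IsTimeOrientation g T)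
    (N : ℕ) (hN : 0 < N) (i : M → EuclideanSpace ℝ (Fin N)) :
    (IsConformalImmersionMink g T N i →
      (IsTimeFunction g T (fun x => i x ⟨0, hN⟩) ∧
        ContMDiff (𝓡 n) 𝓘(ℝ, ℝ) (⊤ : ℕ∞) (fun x => i x ⟨0, hN⟩) ∧
        StablyCausal g T)) ∧
    (IsIsometricImmersionMink g T N i →
      ((∃ X : ∀ x : M, TangentSpace (𝓡 n) x,
          IsTemporalWithGrad g T (fun x => i x ⟨0, hN⟩) X ∧
          ∀ x : M, g x (X x) (X x) ≤ -1) ∧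
        (∀ p q : M,
          timeSep g T p q ≤
            timeSep (fun (_ : EuclideanSpace ℝ (Fin N)) v w => mink N v w)
              (fun _ => minkE0 N) (i p) (i q)) ∧
        (∀ p q : M, timeSep g T p q ≠ ⊤))) :=
  conformal_immersion_mink_implies_stably_causal_general g T hg hT N hN i

end
end

section
/- Let (M,g) be a spacetime with a temporal function τ whose gradient satisfies |∇τ| ≥ ε(τ) for some positive continuous function ε of the value of τ (equivalently, in the orthogonal decomposition g = −β dτ² + g_τ, the lapse satisfies β(τ,x) ≤ A(τ)² with A = 1/ε). Then there exists a smooth strictly increasing function f: ℝ → ℝ such that τ̂ = f∘τ is a steep temporal function, i.e. g(∇τ̂, ∇τ̂) ≤ −1. -/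
open Manifold Set Topology Function
open scoped ENNReal

noncomputable section

variable {n : ℕ} {M : Type*} [TopologicalSpace M] [ChartedSpace (EuclideanSpace ℝ (Fin n)) M]

variable (g : ∀ x : M, TangentSpace (𝓡 n) x → TangentSpace (𝓡 n) x → ℝ)
  (T : ∀ x : M, TangentSpace (𝓡 n) x)

open Filter in
/-- Given a continuous function `h`, there is a real-analytic function `f` whose derivative
dominates `h` and is positive. -/
theorem exists_analytic_deriv_ge (h : ℝ → ℝ) (hc : Continuous h) :
    ∃ (f φ : ℝ → ℝ), ContDiff ℝ (⊤ : ℕ∞) f ∧ (∀ s, HasDerivAt f (φ s) s) ∧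
      (∀ s, h s ≤ φ s) ∧ (∀ s, 1 ≤ φ s) := by
  -- bounds on compact intervals
  have hbdd : ∀ k : ℕ, ∃ b : ℝ, 1 ≤ b ∧ ∀ s : ℝ, |s| ≤ (k + 2 : ℝ) → h s ≤ b := by
    intro k
    obtain ⟨b, hb⟩ := (isCompact_Icc (a := (-(k+2) : ℝ)) (b := (k+2 : ℝ))).bddAbove_image
      hc.continuousOn |>.imp (fun b hb => hb)
    refine ⟨max b 1, le_max_right _ _, fun s hs => ?_⟩
    have : h s ∈ h '' Icc (-(k+2) : ℝ) (k+2) :=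
      ⟨s, ⟨neg_le_of_abs_le hs, le_of_abs_le hs⟩, rfl⟩
    exact le_trans (hb this) (le_max_left _ _)
  choose c hc1 hcb using hbdd
  -- choose exponents
  have hq : ∀ k : ℕ, (0:ℝ) ≤ (k : ℝ) / (k + 1) ∧ (k : ℝ) / (k + 1) < 1 := by
    intro k
    constructor
    · positivity
    · rw [div_lt_one (by positivity)]; linarith
  have hexp : ∀ k : ℕ, ∃ m : ℕ, c k * ((k : ℝ) / (k + 1)) ^ (2 * m) ≤ (1/2 : ℝ) ^ k := by
    intro k
    have h0 := (hq k).1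
    have h1 := (hq k).2
    have := tendsto_pow_atTop_nhds_zero_of_lt_one h0 h1
    have hck : (0:ℝ) < c k := lt_of_lt_of_le one_pos (hc1 k)
    have hlt : (0:ℝ) < (1/2:ℝ)^k / c k := by positivity
    obtain ⟨m, hm⟩ := ((this.eventually (eventually_lt_nhds hlt)).exists)
    refine ⟨m, ?_⟩
    have h2 : ((k:ℝ)/(k+1)) ^ (2*m) ≤ ((k:ℝ)/(k+1)) ^ m :=
      pow_le_pow_of_le_one h0 h1.le (by omega)
    have := mul_le_mul_of_nonneg_left (h2.trans hm.le) (by linarith [hc1 k] : (0:ℝ) ≤ c k)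
    calc c k * ((k:ℝ)/(k+1)) ^ (2*m) ≤ c k * ((1/2:ℝ)^k / c k) := this
      _ = (1/2:ℝ)^k := by field_simp
  choose n hn using hexp
  -- coefficients
  set A : ℕ → ℝ := fun k => c k / ((k + 1 : ℝ)) ^ (2 * n k) with hA
  set B : ℕ → ℝ := fun k => A k / (2 * n k + 1) with hB
  have hApos : ∀ k, 0 < A k := fun k => by
    simp only [hA]
    exact div_pos (lt_of_lt_of_le one_pos (hc1 k)) (by positivity)
  -- uniform bound on closed balls
  have hubd : ∀ R : ℝ, 1 ≤ R → Summable (fun k => c k * (R / (k+1)) ^ (2 * n k)) := by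
    intro R hR
    have hR0 : (0:ℝ) ≤ R := by linarith
    set u := fun k => c k * (R / (k+1 : ℝ)) ^ (2 * n k) with hu
    have hunn : ∀ k, 0 ≤ u k := fun k => by
      have h0 := hc1 k
      exact mul_nonneg (by linarith) (by positivity)
    rw [← summable_nat_add_iff ⌈R⌉₊]
    have hle : ∀ k : ℕ, u (k + ⌈R⌉₊) ≤ (1/2:ℝ) ^ (k + ⌈R⌉₊) := by
      intro k
      set j := k + ⌈R⌉₊ with hj
      have hRj : R ≤ (j : ℝ) := le_trans (Nat.le_ceil R)
        (by exact_mod_cast Nat.cast_le.2 (Nat.le_add_left _ _))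
      have h1 : R / ((j:ℝ) + 1) ≤ (j : ℝ) / (j + 1) := by gcongr
      have h2 : (R / ((j:ℝ)+1)) ^ (2 * n j) ≤ ((j:ℝ)/(j+1)) ^ (2 * n j) :=
        pow_le_pow_left₀ (by positivity) h1 _
      calc u j ≤ c j * ((j:ℝ)/(j+1)) ^ (2 * n j) := by
            have := hc1 j
            exact mul_le_mul_of_nonneg_left h2 (by linarith)
        _ ≤ (1/2:ℝ) ^ j := hn j
    refine Summable.of_nonneg_of_le (fun k => hunn _) hle ?_
    simpa [pow_add] using (summable_geometric_of_lt_one (by norm_num) (by norm_num :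
      (1/2:ℝ) < 1)).mul_right ((1/2:ℝ) ^ ⌈R⌉₊)
  -- the complex power series terms and their primitives
  set D : ℕ → ℂ → ℂ := fun k z => (A k : ℂ) * z ^ (2 * n k) with hD
  set G : ℕ → ℂ → ℂ := fun k z => (B k : ℂ) * z ^ (2 * n k + 1) with hG
  have hDG : ∀ k z, HasDerivAt (G k) (D k z) z := by
    intro k z
    have h1 : HasDerivAt (fun z : ℂ => z ^ (2 * n k + 1))
        ((2 * n k + 1 : ℕ) * z ^ (2 * n k)) z := by
      simpa using hasDerivAt_pow (2 * n k + 1) z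
    have h2 := h1.const_mul (B k : ℂ)
    have h3 : (B k : ℂ) * (((2 * n k + 1 : ℕ) : ℂ) * z ^ (2 * n k)) = D k z := by
      have hne : ((2:ℝ) * (n k : ℝ) + 1) ≠ 0 := by positivity
      have hBA : (B k : ℝ) * ((2 * n k + 1 : ℕ) : ℝ) = A k := by
        rw [hB]; push_cast; field_simp
      have h4 := congrArg (fun r : ℝ => (r : ℂ)) hBA
      push_cast at h4
      simp only [hD]
      rw [← mul_assoc, ← Complex.ofReal_natCast, ← Complex.ofReal_mul, hBA]
    rwa [h3] at h2
  have hDbound : ∀ (R : ℝ), ∀ k, ∀ z : ℂ, z ∈ Metric.closedBall (0:ℂ) R →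
      ‖D k z‖ ≤ c k * (R / (k+1)) ^ (2 * n k) := by
    intro R k z hz
    have hz' : ‖z‖ ≤ R := by simpa using hz
    have hR0 : (0:ℝ) ≤ R := le_trans (norm_nonneg z) hz'
    have hDnorm : ‖D k z‖ = A k * ‖z‖ ^ (2 * n k) := by
      simp [hD, norm_mul, norm_pow, abs_of_pos (hApos k)]
    rw [hDnorm]
    calc A k * ‖z‖ ^ (2 * n k) ≤ A k * R ^ (2 * n k) :=
          mul_le_mul_of_nonneg_left (pow_le_pow_left₀ (norm_nonneg z) hz' _) (hApos k).le
      _ = c k * (R / ((k:ℝ)+1)) ^ (2 * n k) := by rw [hA, div_pow]; ring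
  -- partial sums converge locally uniformly
  have hGdiffN : ∀ N : ℕ, Differentiable ℂ (fun z => ∑ k ∈ Finset.range N, G k z) := by
    intro N
    exact Differentiable.fun_sum fun k _ => fun z => (hDG k z).differentiableAt
  set Gsum : ℂ → ℂ := fun z => ∑' k, G k z with hGsum
  have hTLU : TendstoLocallyUniformlyOn
      (fun N z => ∑ k ∈ Finset.range N, G k z) Gsum atTop univ := by
    rw [tendstoLocallyUniformlyOn_iff_forall_isCompact isOpen_univ]
    intro K _ hK
    obtain ⟨R₀, hR₀⟩ := hK.isBounded.subset_closedBall 0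
    set R := max R₀ 1 with hRdef
    have hR1 : (1:ℝ) ≤ R := le_max_right _ _
    have hKR : K ⊆ Metric.closedBall (0:ℂ) R :=
      hR₀.trans (Metric.closedBall_subset_closedBall (le_max_left _ _))
    have hsum : Summable (fun k => R * (c k * (R / (k+1)) ^ (2 * n k))) :=
      (hubd R hR1).mul_left R
    refine (tendstoUniformlyOn_tsum_nat hsum ?_).mono hKR
    intro k z hz
    have hz' : ‖z‖ ≤ R := by simpa using hz
    have hR0' : (0:ℝ) ≤ R := by linarith
    have hBpos : 0 < B k := by
      simp only [hB]
      exact div_pos (hApos k) (by positivity)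
    have h1 : ‖G k z‖ = B k * ‖z‖ ^ (2 * n k + 1) := by
      simp [hG, norm_mul, norm_pow, abs_of_pos hBpos]
    have hBA : B k ≤ A k := by
      simp only [hB]
      exact div_le_self (hApos k).le
        (by have := Nat.cast_nonneg (α := ℝ) (n k); linarith)
    calc ‖G k z‖ = B k * ‖z‖ ^ (2 * n k + 1) := h1
      _ ≤ A k * (R ^ (2 * n k) * R) := by
          rw [pow_succ]
          have h6 : ‖z‖ ^ (2 * n k) * ‖z‖ ≤ R ^ (2 * n k) * R :=
            mul_le_mul (pow_le_pow_left₀ (norm_nonneg z) hz' _) hz' (norm_nonneg z)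
              (pow_nonneg hR0' _)
          calc B k * (‖z‖ ^ (2 * n k) * ‖z‖) ≤ A k * (‖z‖ ^ (2 * n k) * ‖z‖) :=
                mul_le_mul_of_nonneg_right hBA
                  (mul_nonneg (pow_nonneg (norm_nonneg z) _) (norm_nonneg z))
            _ ≤ A k * (R ^ (2 * n k) * R) := mul_le_mul_of_nonneg_left h6 (hApos k).le
      _ = R * (c k * (R / ((k:ℝ)+1)) ^ (2 * n k)) := by rw [hA, div_pow]; ring
  -- Gsum is entire with derivative the term-wise derivative series
  have hGsumDiff : DifferentiableOn ℂ Gsum univ :=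
    hTLU.differentiableOn (Filter.Eventually.of_forall fun N =>
      (hGdiffN N).differentiableOn) isOpen_univ
  have hDsummable : ∀ z : ℂ, Summable (fun k => D k z) := by
    intro z
    apply Summable.of_norm
    refine Summable.of_nonneg_of_le (fun k => norm_nonneg _)
      (fun k => hDbound (‖z‖ + 1) k z (by simp)) ?_
    exact hubd (‖z‖ + 1) (by linarith [norm_nonneg z])
  have hGsumDeriv : ∀ z : ℂ, deriv Gsum z = ∑' k, D k z := by
    intro z
    have h1 := (hTLU.deriv (Filter.Eventually.of_forall fun N =>
      (hGdiffN N).differentiableOn) isOpen_univ).tendsto_at (mem_univ z)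
    have h2 : ∀ N : ℕ, (deriv fun z => ∑ k ∈ Finset.range N, G k z) z
        = ∑ k ∈ Finset.range N, D k z := by
      intro N
      have : HasDerivAt (fun z => ∑ k ∈ Finset.range N, G k z)
          (∑ k ∈ Finset.range N, D k z) z := HasDerivAt.fun_sum fun k _ => hDG k z
      exact this.deriv
    have h3 : Filter.Tendsto (fun N : ℕ => ∑ k ∈ Finset.range N, D k z) atTop
        (nhds (∑' k, D k z)) := (hDsummable z).hasSum.tendsto_sum_nat
    have h4 : Filter.Tendsto (fun N : ℕ => ∑ k ∈ Finset.range N, D k z) atTop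
        (nhds (deriv Gsum z)) := by
      simpa [Function.comp, h2] using h1
    exact tendsto_nhds_unique h4 h3
  -- assemble F and f
  set F : ℂ → ℂ := fun z => (c 0 : ℂ) * z + Gsum z with hF
  have hFdiff : Differentiable ℂ F :=
    ((differentiable_id.const_mul _)).add (differentiableOn_univ.1 hGsumDiff)
  have hFderiv : ∀ z : ℂ, HasDerivAt F ((c 0 : ℂ) + ∑' k, D k z) z := by
    intro z
    have h1 : HasDerivAt (fun z : ℂ => (c 0 : ℂ) * z) (c 0 : ℂ) z := by
      simpa using (hasDerivAt_id z).const_mul (c 0 : ℂ)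
    have h2 : HasDerivAt Gsum (deriv Gsum z) z :=
      ((differentiableOn_univ.1 hGsumDiff) z).hasDerivAt
    rw [hGsumDeriv z] at h2
    exact h1.add h2
  set φ : ℝ → ℝ := fun s => c 0 + ∑' k, A k * s ^ (2 * n k) with hφ
  have hsummR : ∀ s : ℝ, Summable (fun k => A k * s ^ (2 * n k)) := by
    intro s
    apply Summable.of_norm
    refine Summable.of_nonneg_of_le (fun k => norm_nonneg _) (fun k => ?_)
      (hubd (|s| + 1) (by linarith [abs_nonneg s]))
    have h1 : ‖A k * s ^ (2 * n k)‖ = A k * |s| ^ (2 * n k) := by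
      rw [norm_mul, norm_pow, Real.norm_eq_abs, Real.norm_eq_abs, abs_of_pos (hApos k)]
    rw [h1]
    calc A k * |s| ^ (2 * n k) ≤ A k * (|s| + 1) ^ (2 * n k) :=
          mul_le_mul_of_nonneg_left (pow_le_pow_left₀ (abs_nonneg s)
            (by linarith [abs_nonneg s]) _) (hApos k).le
      _ = c k * ((|s| + 1) / ((k:ℝ)+1)) ^ (2 * n k) := by rw [hA, div_pow]; ring
  have hφval : ∀ s : ℝ, ((c 0 : ℂ) + ∑' k, D k (s : ℂ)) = ((φ s : ℝ) : ℂ) := by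
    intro s
    have h1 : (fun k => D k (s:ℂ)) = fun k => ((A k * s ^ (2 * n k) : ℝ) : ℂ) := by
      funext k; simp only [hD]; push_cast; ring
    rw [h1, ← Complex.ofReal_tsum]
    simp only [hφ]
    push_cast
    ring
  set f : ℝ → ℝ := fun s => (F s).re with hf
  have hfderiv : ∀ s : ℝ, HasDerivAt f (φ s) s := by
    intro s
    have := (hFderiv (s : ℂ)).real_of_complex
    rwa [hφval s, Complex.ofReal_re] at this
  have htsum_nonneg : ∀ s : ℝ, 0 ≤ ∑' k, A k * s ^ (2 * n k) :=
    fun s => tsum_nonneg fun k => by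
      have h1 : Even (2 * n k) := even_two_mul _
      exact mul_nonneg (hApos k).le (h1.pow_nonneg s)
  have hφ1 : ∀ s, 1 ≤ φ s := by
    intro s
    have := htsum_nonneg s
    have := hc1 0
    simp only [hφ]
    linarith
  have hφge : ∀ s, h s ≤ φ s := by
    intro s
    by_cases hs2 : |s| ≤ 2
    · have h1 : h s ≤ c 0 := hcb 0 s (by push_cast; linarith)
      have := htsum_nonneg s
      simp only [hφ]; linarith
    · push_neg at hs2
      have hs0 : (0:ℝ) ≤ |s| := abs_nonneg s
      set k : ℕ := ⌊|s|⌋₊ - 1 with hk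
      have hfl : 2 ≤ ⌊|s|⌋₊ := Nat.le_floor (by exact_mod_cast hs2.le)
      have hknat : k + 1 = ⌊|s|⌋₊ := by rw [hk]; omega
      have hk1 : (k:ℝ) + 1 = (⌊|s|⌋₊ : ℝ) := by exact_mod_cast congrArg (Nat.cast (R := ℝ)) hknat
      have hkle : (k:ℝ) + 1 ≤ |s| := hk1.trans_le (Nat.floor_le hs0)
      have hkge : |s| ≤ (k:ℝ) + 2 := by
        have := (Nat.lt_floor_add_one |s|).le
        rw [← hk1] at this; linarith
      have h1 : h s ≤ c k := hcb k s hkge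
      have h2 : c k ≤ A k * s ^ (2 * n k) := by
        have hterm : A k * s ^ (2 * n k) = c k * (s / ((k:ℝ)+1)) ^ (2 * n k) := by
          rw [hA, div_pow]; ring
        rw [hterm]
        have hbase : (1:ℝ) ≤ (s / ((k:ℝ)+1)) ^ 2 := by
          rw [div_pow, le_div_iff₀ (by positivity), one_mul]
          nlinarith [hkle, sq_abs s, abs_nonneg s, sq_nonneg (|s| - ((k:ℝ)+1))]
        have h3 : (1:ℝ) ≤ (s / ((k:ℝ)+1)) ^ (2 * n k) := by
          rw [pow_mul]
          exact one_le_pow₀ hbase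
        nlinarith [hc1 k]
      have h3 : A k * s ^ (2 * n k) ≤ ∑' j, A j * s ^ (2 * n j) :=
        Summable.le_tsum (hsummR s) k fun j _ => by
          have h1 : Even (2 * n j) := even_two_mul _
          exact mul_nonneg (hApos j).le (h1.pow_nonneg s)
      have := hc1 0
      simp only [hφ]
      linarith
  have hfC : ContDiff ℝ (⊤ : ℕ∞) f := (hFdiff.contDiff (n := (⊤ : ℕ∞))).real_of_complex
  exact ⟨f, φ, hfC, hfderiv, hφge, hφ1⟩

/-- If a temporal function `τ` satisfies `|∇τ| ≥ ε(τ)` for some positive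
continuous function `ε` of the value of `τ`, then some composition `τ̂ = f ∘ τ` with a
smooth strictly increasing `f : ℝ → ℝ` is a steep temporal function. -/
theorem exists_reparametrization_steep_temporal
    {n : ℕ} {M : Type*} [TopologicalSpace M] [ChartedSpace (EuclideanSpace ℝ (Fin n)) M]
    [IsManifold (𝓡 n) ((⊤ : ℕ∞) : WithTop ℕ∞) M] [ConnectedSpace M]
    (g : ∀ x : M, TangentSpace (𝓡 n) x → TangentSpace (𝓡 n) x → ℝ)
    (T : ∀ x : M, TangentSpace (𝓡 n) x)
    (hg : IsLorentzMetric g) (hT : IsTimeOrientation g T)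
    (τ : M → ℝ) (X : ∀ x : M, TangentSpace (𝓡 n) x)
    (hτ : IsTemporalWithGrad g T τ X)
    (ε : ℝ → ℝ) (hεcont : Continuous ε) (hεpos : ∀ s : ℝ, 0 < ε s)
    (hlb : ∀ x : M, ε (τ x) ≤ Real.sqrt (-(g x (X x) (X x)))) :
    ∃ f : ℝ → ℝ, ContDiff ℝ (⊤ : ℕ∞) f ∧ StrictMono f ∧
      ∃ Y : ∀ x : M, TangentSpace (𝓡 n) x,
        IsTemporalWithGrad g T (fun x => f (τ x)) Y ∧
        ∀ x : M, g x (Y x) (Y x) ≤ -1 := by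
  obtain ⟨f, φ, hfC, hfd, hφge, hφ1⟩ := exists_analytic_deriv_ge (fun s => 1 / ε s)
    (continuous_const.div hεcont fun s => (hεpos s).ne')
  have hφpos : ∀ s, 0 < φ s := fun s => lt_of_lt_of_le one_pos (hφ1 s)
  have hmono : StrictMono f :=
    strictMono_of_deriv_pos fun s => by rw [(hfd s).deriv]; exact hφpos s
  have hfC' : ContMDiff 𝓘(ℝ, ℝ) 𝓘(ℝ, ℝ) (⊤ : ℕ∞) f := hfC.contMDiff
  have hkey : ∀ x : M, mfderiv (𝓡 n) 𝓘(ℝ, ℝ) (fun x => f (τ x)) x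
      = φ (τ x) • (mfderiv (𝓡 n) 𝓘(ℝ, ℝ) τ x) := by
    intro x
    have hτd : MDifferentiableAt (𝓡 n) 𝓘(ℝ, ℝ) τ x :=
      hτ.contMDiff.mdifferentiableAt (by simp)
    have hfd' : MDifferentiableAt 𝓘(ℝ, ℝ) 𝓘(ℝ, ℝ) f (τ x) :=
      hfC'.mdifferentiableAt (by simp)
    have h1 := mfderiv_comp x hfd' hτd
    have h2 : (fun x => f (τ x)) = f ∘ τ := rfl
    rw [h2, h1, mfderiv_eq_fderiv]
    refine ContinuousLinearMap.ext fun v => ?_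
    have hL : ∀ (L : ℝ →L[ℝ] ℝ) (r : ℝ), L r = r * L 1 := fun L r => by
      have h := L.map_smul r 1
      simpa [smul_eq_mul] using h
    show fderiv ℝ f (τ x) (show ℝ from mfderiv (𝓡 n) 𝓘(ℝ, ℝ) τ x v) = φ (τ x) * (show ℝ from mfderiv (𝓡 n) 𝓘(ℝ, ℝ) τ x v)
    refine (hL (fderiv ℝ f (τ x)) _).trans ?_
    have h5 : fderiv ℝ f (τ x) 1 = φ (τ x) := by
      rw [fderiv_apply_one_eq_deriv, (hfd (τ x)).deriv]
    rw [h5]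
    exact mul_comm _ _
  have hsq : ∀ x : M, g x (φ (τ x) • X x) (φ (τ x) • X x)
      = φ (τ x) * (φ (τ x) * g x (X x) (X x)) := by
    intro x
    rw [hg.smul_left x _ _ _, hg.symm x (X x) (φ (τ x) • X x), hg.smul_left x _ _ _,
      hg.symm x (X x) (X x)]
  refine ⟨f, hfC, hmono, fun x => φ (τ x) • X x, ⟨?_, ?_, ?_, ?_⟩, ?_⟩
  · exact (hfC'.of_le le_rfl).comp hτ.contMDiff
  · intro x v
    have h1 : g x (φ (τ x) • X x) v = φ (τ x) * g x (X x) v := hg.smul_left x _ _ _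
    rw [h1, hτ.grad x v, hkey x]; rfl
  · intro x
    show g x (φ (τ x) • X x) (φ (τ x) • X x) < 0
    rw [hsq x]
    exact mul_neg_of_pos_of_neg (hφpos _)
      (mul_neg_of_pos_of_neg (hφpos _) (hτ.timelike x))
  · intro x
    have h1 : g x (φ (τ x) • X x) (T x) = φ (τ x) * g x (X x) (T x) := hg.smul_left x _ _ _
    rw [PastDir, h1]
    exact mul_pos (hφpos _) (hτ.past x)
  · intro x
    rw [hsq x]
    have ha : 0 < -(g x (X x) (X x)) := neg_pos.2 (hτ.timelike x)
    have hε2 : ε (τ x) ^ 2 ≤ -(g x (X x) (X x)) := by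
      have h1 := hlb x
      have h2 : ε (τ x) ^ 2 ≤ Real.sqrt (-(g x (X x) (X x))) ^ 2 :=
        pow_le_pow_left₀ (hεpos _).le h1 2
      rwa [Real.sq_sqrt ha.le] at h2
    have h1e : 1 ≤ φ (τ x) * ε (τ x) := by
      have := hφge (τ x)
      rw [div_le_iff₀ (hεpos (τ x))] at this
      linarith [this]
    nlinarith [hε2, h1e, (hφpos (τ x)).le, (hεpos (τ x)).le, sq_nonneg (φ (τ x)),
      mul_le_mul_of_nonneg_left hε2 (sq_nonneg (φ (τ x)))]


end
end
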